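/- arXiv:quant-ph/0608063 — 3 statements merged into one kernel-verified Lean document; each statement's English description precedes it below -/
import Mathlib

section
/- Let C₁ ⊆ C₁^⊥ ⊆ F_4^{mn} be associated additive codes of an outer quantum code whose dual C₁^⊥, viewed as a block code over the alphabet F_4^m (grouping coordinates into n blocks of size m), has minimum nonzero block weight d₁ ≥ k+1. Let C₂ ⊆ C₂^⊥ ⊆ F_4^{n₂} be inner associated codes such that every vector of C₂^⊥ \ C₂ has Hamming weight ≥ d₂, and let ρ: F_4^m → C₂^⊥/C₂ be an F_2-linear bijection. Define the concatenated codes ρ(C₁) ⊆ ρ(C₁^⊥) ⊆ F_4^{n·n₂} by replacing each block v_i ∈ F_4^m of a codeword by a representative ρ(v_i) plus an arbitrary element of C₂. Then every vector in ρ(C₁^⊥) \ ρ(C₁) has Hamming weight at least d₁ · d₂. -/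
abbrev F4 := GaloisField 2 2

/-- The trace inner product on F_4^N. -/
noncomputable def trF {N : ℕ} (u v : Fin N → F4) : F4 :=
  ∑ i, (u i * v i ^ 2 + u i ^ 2 * v i)

/-- The trace inner product on (F_4^m)^n ≅ F_4^{nm}, read blockwise. -/
noncomputable def trB {n m : ℕ} (u v : Fin n → Fin m → F4) : F4 :=
  ∑ i, ∑ j, (u i j * v i j ^ 2 + u i j ^ 2 * v i j)

/-- The concatenation of an outer code D ⊆ (F_4^m)^n with the inner pair
C₂ ⊆ C₂^⊥ via the representative map ρ : F_4^m → C₂^⊥ (choosing a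
representative of each coset of C₂): each block v_i is replaced by
ρ(v_i) plus an arbitrary element of C₂. -/
def concat {n m n₂ : ℕ} (C2 : Submodule (ZMod 2) (Fin n₂ → F4))
    (ρ : (Fin m → F4) → (Fin n₂ → F4)) (D : Set (Fin n → Fin m → F4)) :
    Set (Fin n → Fin n₂ → F4) :=
  {c | ∃ b ∈ D, ∀ i, c i - ρ (b i) ∈ C2}

lemma trF_add_left {N : ℕ} (u v w : Fin N → F4) :
    trF (u + v) w = trF u w + trF v w := by
  unfold trF
  rw [← Finset.sum_add_distrib]
  refine Finset.sum_congr rfl fun i _ => ?_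
  have h2 : (u i + v i) ^ 2 = u i ^ 2 + v i ^ 2 := add_pow_char _ _ 2
  simp only [Pi.add_apply]
  rw [h2]; ring

/-- the product bound for concatenated quantum codes.
If every nonzero codeword of C₁^⊥ has block weight ≥ d₁ and every vector of
C₂^⊥ \ C₂ has Hamming weight ≥ d₂, then every vector of ρ(C₁^⊥) \ ρ(C₁) has
Hamming weight ≥ d₁·d₂. -/
theorem concatenated_product_bound (n m n₂ d1 d2 : ℕ)
    (C1 : Submodule (ZMod 2) (Fin n → Fin m → F4))
    (hC1so : ∀ u ∈ C1, ∀ w ∈ C1, trB u w = 0)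
    (C2 : Submodule (ZMod 2) (Fin n₂ → F4))
    (hC2so : ∀ u ∈ C2, ∀ w ∈ C2, trF u w = 0)
    (ρ : (Fin m → F4) → (Fin n₂ → F4))
    -- ρ is an F_2-linear bijection from F_4^m onto C₂^⊥/C₂ (via representatives)
    (hρmem : ∀ v, ∀ w ∈ C2, trF (ρ v) w = 0)
    (hρadd : ∀ v w, ρ (v + w) - (ρ v + ρ w) ∈ C2)
    (hρinj : ∀ v w, ρ v - ρ w ∈ C2 → v = w)
    (hρsurj : ∀ u : Fin n₂ → F4, (∀ w ∈ C2, trF u w = 0) → ∃ v, u - ρ v ∈ C2)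
    -- every nonzero codeword of C₁^⊥, read blockwise, has ≥ d₁ nonzero blocks
    (houter : ∀ b : Fin n → Fin m → F4, (∀ w ∈ C1, trB b w = 0) → b ≠ 0 →
        d1 ≤ Nat.card {i : Fin n // b i ≠ 0})
    -- every vector of C₂^⊥ \ C₂ has Hamming weight ≥ d₂
    (hinner : ∀ u : Fin n₂ → F4, (∀ w ∈ C2, trF u w = 0) → u ∉ C2 →
        d2 ≤ Nat.card {i : Fin n₂ // u i ≠ 0}) :
    ∀ c : Fin n → Fin n₂ → F4,
      c ∈ concat C2 ρ {b | ∀ w ∈ C1, trB b w = 0} →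
      c ∉ concat C2 ρ (C1 : Set (Fin n → Fin m → F4)) →
      d1 * d2 ≤ Nat.card {p : Fin n × Fin n₂ // c p.1 p.2 ≠ 0} := by
  classical
  intro c hc hnc
  obtain ⟨b, hb, hcb⟩ := hc
  have hbC1 : b ∉ C1 := fun h => hnc ⟨b, h, hcb⟩
  have hb0 : b ≠ 0 := fun h => hbC1 (h ▸ C1.zero_mem)
  have hρ0 : ρ 0 ∈ C2 := by
    have h := hρadd 0 0
    rw [add_zero] at h
    have he : ρ 0 - (ρ 0 + ρ 0) = -(ρ 0) := by ring
    rw [he] at h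
    exact (neg_mem_iff).mp h
  -- each bad block of c lies in C₂^⊥ \ C₂
  have hblock : ∀ i : Fin n, b i ≠ 0 → d2 ≤ Fintype.card {j : Fin n₂ // c i j ≠ 0} := by
    intro i hbi
    have hu : c i - ρ (b i) ∈ C2 := hcb i
    have hdual : ∀ w ∈ C2, trF (c i) w = 0 := by
      intro w hw
      have hsplit : c i = ρ (b i) + (c i - ρ (b i)) := by ring
      rw [hsplit, trF_add_left, hρmem _ _ hw, hC2so _ hu _ hw, add_zero]
    have hnotC2 : c i ∉ C2 := by
      intro h
      have hρbi : ρ (b i) ∈ C2 := by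
        have := C2.sub_mem h hu
        have he : c i - (c i - ρ (b i)) = ρ (b i) := by ring
        rwa [he] at this
      exact hbi (hρinj (b i) 0 (C2.sub_mem hρbi hρ0))
    have := hinner _ hdual hnotC2
    rwa [Nat.card_eq_fintype_card] at this
  -- count
  rw [Nat.card_eq_fintype_card,
    Fintype.card_congr (Equiv.subtypeProdEquivSigmaSubtype fun i j => c i j ≠ 0),
    Fintype.card_sigma]
  have hS : d1 ≤ (Finset.univ.filter fun i => b i ≠ 0).card := by
    have := houter b hb hb0
    rwa [Nat.card_eq_fintype_card, Fintype.card_subtype] at this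
  calc d1 * d2 ≤ (Finset.univ.filter fun i => b i ≠ 0).card * d2 :=
        Nat.mul_le_mul_right _ hS
    _ ≤ ∑ i ∈ Finset.univ.filter (fun i => b i ≠ 0),
          Fintype.card {j : Fin n₂ // c i j ≠ 0} := by
        rw [← smul_eq_mul]
        exact Finset.card_nsmul_le_sum _ _ _ fun i hi =>
          hblock i (Finset.mem_filter.mp hi).2
    _ ≤ ∑ i : Fin n, Fintype.card {j : Fin n₂ // c i j ≠ 0} :=
        Finset.sum_le_sum_of_subset (Finset.filter_subset _ _)
end

section
/- With notation as in the concatenated construction: if C₁ has parameters (nm, 2^{nm−K}) as an additive code over F_4 (so C₁^⊥ has parameters (nm, 2^{nm+K})), C₂ has parameters (n₂, 2^{n₂−m}), and ρ: F_4^m → C₂^⊥/C₂ is a bijective F_2-linear map, then ρ(C₁) and ρ(C₁^⊥) are additive codes of length n·n₂ with |ρ(C₁)| = 2^{n n₂ − K} and |ρ(C₁^⊥)| = 2^{n n₂ + K}. -/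
lemma concat_card {n m n₂ : ℕ} (C2 : Submodule (ZMod 2) (Fin n₂ → F4))
    (ρ : (Fin m → F4) → (Fin n₂ → F4))
    (hρinj : ∀ v w, ρ v - ρ w ∈ C2 → v = w) (D : Set (Fin n → Fin m → F4)) :
    Nat.card (concat C2 ρ D) = Nat.card D * Nat.card C2 ^ n := by
  have e : (D × (Fin n → C2)) ≃ concat C2 ρ D := by
    refine Equiv.ofBijective
      (fun p => ⟨fun i => ρ (p.1.1 i) + (p.2 i : Fin n₂ → F4),
        ⟨p.1.1, p.1.2, fun i => by simpa using (p.2 i).2⟩⟩) ⟨?_, ?_⟩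
    · rintro ⟨⟨b, hb⟩, u⟩ ⟨⟨b', hb'⟩, u'⟩ h
      have h' : ∀ i, ρ (b i) + (u i : Fin n₂ → F4) = ρ (b' i) + (u' i : Fin n₂ → F4) :=
        fun i => congrFun (congrArg Subtype.val h) i
      have hbb : b = b' := by
        funext i
        refine hρinj _ _ ?_
        have : ρ (b i) - ρ (b' i) = (u' i : Fin n₂ → F4) - (u i : Fin n₂ → F4) := by
          have := h' i; abel_nf; abel_nf at this
          linear_combination (norm := module) this
        rw [this]
        exact sub_mem (u' i).2 (u i).2
      subst hbb
      have huu : u = u' := by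
        funext i
        exact Subtype.ext (add_left_cancel (h' i))
      simp [huu]
    · rintro ⟨c, b, hb, hc⟩
      refine ⟨⟨⟨b, hb⟩, fun i => ⟨c i - ρ (b i), hc i⟩⟩, ?_⟩
      ext i : 2
      simp
  rw [← Nat.card_congr e, Nat.card_prod, Nat.card_fun, Nat.card_eq_fintype_card (α := Fin n),
    Fintype.card_fin]

/-- sizes of the concatenated codes. If |C₁| = 2^{nm-K},
|C₁^⊥| = 2^{nm+K} and |C₂| = 2^{n₂-m}, then |ρ(C₁)| = 2^{nn₂-K} and
|ρ(C₁^⊥)| = 2^{nn₂+K}. -/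
theorem concatenated_code_sizes (n m n₂ K : ℕ) (hK : K ≤ n * m) (hm : m ≤ n₂)
    (C1 : Submodule (ZMod 2) (Fin n → Fin m → F4))
    (hC1so : ∀ u ∈ C1, ∀ w ∈ C1, trB u w = 0)
    (hC1card : Nat.card C1 = 2 ^ (n * m - K))
    (hC1dcard : Nat.card {b : Fin n → Fin m → F4 | ∀ w ∈ C1, trB b w = 0}
        = 2 ^ (n * m + K))
    (C2 : Submodule (ZMod 2) (Fin n₂ → F4))
    (hC2so : ∀ u ∈ C2, ∀ w ∈ C2, trF u w = 0)
    (hC2card : Nat.card C2 = 2 ^ (n₂ - m))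
    (ρ : (Fin m → F4) → (Fin n₂ → F4))
    (hρmem : ∀ v, ∀ w ∈ C2, trF (ρ v) w = 0)
    (hρadd : ∀ v w, ρ (v + w) - (ρ v + ρ w) ∈ C2)
    (hρinj : ∀ v w, ρ v - ρ w ∈ C2 → v = w)
    (hρsurj : ∀ u : Fin n₂ → F4, (∀ w ∈ C2, trF u w = 0) → ∃ v, u - ρ v ∈ C2) :
    Nat.card (concat C2 ρ (C1 : Set (Fin n → Fin m → F4)))
        = 2 ^ (n * n₂ - K) ∧
      Nat.card (concat C2 ρ {b : Fin n → Fin m → F4 | ∀ w ∈ C1, trB b w = 0})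
        = 2 ^ (n * n₂ + K) := by
  have h1 := concat_card C2 ρ hρinj (C1 : Set (Fin n → Fin m → F4))
  have h2 := concat_card C2 ρ hρinj {b : Fin n → Fin m → F4 | ∀ w ∈ C1, trB b w = 0}
  have hc1 : Nat.card (C1 : Set (Fin n → Fin m → F4)) = 2 ^ (n * m - K) := hC1card
  rw [hc1, hC2card, ← pow_mul] at h1
  rw [hC1dcard, hC2card, ← pow_mul] at h2
  have hnm : n * m ≤ n * n₂ := Nat.mul_le_mul_left n hm
  have hmul : (n₂ - m) * n = n * n₂ - n * m := by
    rw [Nat.sub_mul, Nat.mul_comm n₂ n, Nat.mul_comm m n]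
  constructor
  · rw [h1, ← pow_add, hmul]
    congr 1
    omega
  · rw [h2, ← pow_add, hmul]
    congr 1
    omega
end

section
/- With notation as in the concatenated construction: if ρ: F_4^m → C₂^⊥/C₂ is an F_2-linear bijection preserving the symplectic inner products (the trace inner product on F_4^m and the induced form on C₂^⊥/C₂), then the trace-dual of ρ(C₁) in F_4^{n n₂} equals ρ(C₁^⊥). -/
noncomputable def tf (a b : F4) : F4 := a * b ^ 2 + a ^ 2 * b

lemma F4_two : (2 : F4) = 0 := by
  exact_mod_cast CharP.cast_eq_zero F4 2

lemma tf_comm (a b : F4) : tf a b = tf b a := by unfold tf; ring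

lemma tf_add_left (a b c : F4) : tf (a + b) c = tf a c + tf b c := by
  unfold tf; linear_combination (a * b * c) * F4_two

lemma tf_add_right (a b c : F4) : tf a (b + c) = tf a b + tf a c := by
  unfold tf; linear_combination (a * b * c) * F4_two

lemma tf_zero_right (a : F4) : tf a 0 = 0 := by simp [tf]

lemma trF_eq {N : ℕ} (u v : Fin N → F4) : trF u v = ∑ i, tf (u i) (v i) := rfl

lemma trB_eq {n m : ℕ} (u v : Fin n → Fin m → F4) :
    trB u v = ∑ i, trF (u i) (v i) := rfl

lemma trF_comm {N : ℕ} (u v : Fin N → F4) : trF u v = trF v u := by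
  simp only [trF_eq]; exact Finset.sum_congr rfl fun i _ => tf_comm _ _

lemma trF_add_right {N : ℕ} (u v w : Fin N → F4) :
    trF u (v + w) = trF u v + trF u w := by
  simp only [trF_eq, Pi.add_apply, tf_add_right, Finset.sum_add_distrib]

/-- if ρ preserves the symplectic inner products (the trace
inner product on F_4^m and the induced form on C₂^⊥/C₂), then the trace-dual
of ρ(C₁) equals ρ(C₁^⊥). -/
theorem concatenated_dual (n m n₂ : ℕ)
    (C1 : Submodule (ZMod 2) (Fin n → Fin m → F4))
    (hC1so : ∀ u ∈ C1, ∀ w ∈ C1, trB u w = 0)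
    (C2 : Submodule (ZMod 2) (Fin n₂ → F4))
    (hC2so : ∀ u ∈ C2, ∀ w ∈ C2, trF u w = 0)
    (ρ : (Fin m → F4) → (Fin n₂ → F4))
    (hρmem : ∀ v, ∀ w ∈ C2, trF (ρ v) w = 0)
    (hρadd : ∀ v w, ρ (v + w) - (ρ v + ρ w) ∈ C2)
    (hρinj : ∀ v w, ρ v - ρ w ∈ C2 → v = w)
    (hρsurj : ∀ u : Fin n₂ → F4, (∀ w ∈ C2, trF u w = 0) → ∃ v, u - ρ v ∈ C2)
    -- ρ preserves the symplectic inner products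
    (hρsymp : ∀ v w : Fin m → F4, trF (ρ v) (ρ w) = trF v w) :
    {u : Fin n → Fin n₂ → F4 |
        ∀ w ∈ concat C2 ρ (C1 : Set (Fin n → Fin m → F4)), trB u w = 0} =
      concat C2 ρ {b : Fin n → Fin m → F4 | ∀ w ∈ C1, trB b w = 0} := by
  ext u
  simp only [Set.mem_setOf_eq, concat]
  constructor
  · intro hu
    -- each block of u is orthogonal to C2
    have hperp : ∀ i, ∀ c ∈ C2, trF (u i) c = 0 := by
      intro i c hc
      have h0 : trB u (fun _ => ρ 0) = 0 := by
        refine hu _ ⟨0, C1.zero_mem, fun j => ?_⟩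
        simp only [Pi.zero_apply, sub_self]; exact C2.zero_mem
      have h1 : trB u (fun j => ρ 0 + if j = i then c else 0) = 0 := by
        refine hu _ ⟨0, C1.zero_mem, fun j => ?_⟩
        simp only [Pi.zero_apply, add_sub_cancel_left]
        split
        · exact hc
        · exact C2.zero_mem
      have hsplit : trB u (fun j => ρ 0 + if j = i then c else 0)
          = trB u (fun _ => ρ 0) + trF (u i) c := by
        simp only [trB_eq, trF_add_right, Finset.sum_add_distrib]
        congr 1
        rw [Finset.sum_eq_single i]
        · simp
        · intro j _ hj
          simp [hj, trF_eq, tf_zero_right]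
        · simp
      rw [hsplit, h0, zero_add] at h1
      exact h1
    choose b hb using fun i => hρsurj (u i) (hperp i)
    refine ⟨b, ?_, hb⟩
    intro a ha
    have hw : trB u (fun i => ρ (a i)) = 0 := by
      refine hu _ ⟨a, ha, fun i => ?_⟩
      simp only [sub_self]; exact C2.zero_mem
    have key : ∀ i, trF (u i) (ρ (a i)) = trF (b i) (a i) := by
      intro i
      have hdecomp : u i = (u i - ρ (b i)) + ρ (b i) := by ring
      rw [hdecomp, trF_add_left, hρsymp]
      have : trF (u i - ρ (b i)) (ρ (a i)) = 0 := by
        rw [trF_comm]; exact hρmem _ _ (hb i)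
      rw [this, zero_add]
    rw [trB_eq] at hw ⊢
    rw [← hw]
    exact Finset.sum_congr rfl fun i _ => (key i).symm
  · rintro ⟨b, hbD, hb⟩ w ⟨a, haC1, hw⟩
    have key : ∀ i, trF (u i) (w i) = trF (b i) (a i) := by
      intro i
      have hu' : u i = (u i - ρ (b i)) + ρ (b i) := by ring
      have hw' : w i = (w i - ρ (a i)) + ρ (a i) := by ring
      rw [hu', hw', trF_add_left, trF_add_right, trF_add_right, hρsymp]
      rw [hC2so _ (hb i) _ (hw i), hρmem _ _ (hw i),
        trF_comm (u i - ρ (b i)) (ρ (a i)), hρmem _ _ (hb i)]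
      ring
    rw [trB_eq]
    calc ∑ i, trF (u i) (w i) = ∑ i, trF (b i) (a i) :=
          Finset.sum_congr rfl fun i _ => key i
      _ = trB b a := (trB_eq b a).symm
      _ = 0 := hbD a haC1
end
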